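/- Let $f : (0,\infty) \to [0,\infty)$ be nonincreasing and locally absolutely continuous, and suppose there exist $c_1, c_2 > 0$ such that $c_1 f(r)^{(d-1)/d} \le c_2 f(r) - f'(r)$ for almost every $r > 0$, where $d \ge 2$. If $f(r) \to 0$ as $r \to \infty$, then there exists $R_0 > 0$ with $f(R_0) = 0$. -/

import Mathlib

/-!
With `φ = f ^ (1/d)` we have `f = φ ^ d` and `f ^ ((d-1)/d) = φ ^ (d-1)`. Once `φ ≤ c₁/(2c₂)`,
the term `c₂ f = c₂ φ · φ ^ (d-1)` absorbs at most half of `c₁ φ ^ (d-1)`, so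
`-f' ≥ (c₁/2) φ ^ (d-1)` and, integrating, `(c₁/2)(b - a) φ(b) ^ (d-1) ≤ φ(a) ^ d - φ(b) ^ d`.
Hence `φ` at least halves over a step of length `K φ(a)`, `K = 2 ^ d / c₁`; these steps form a
geometric series, so `φ` vanishes at `a + 2 K φ(a)`.
-/

open MeasureTheory Set Filter Topology

theorem mul_sub_le_sub_of_sub_eq_integral {f g : ℝ → ℝ} {a b m : ℝ} (hab : a ≤ b)
    (hg : IntervalIntegrable g volume a b) (hfg : f b - f a = ∫ x in a..b, g x)
    (hle : ∀ᵐ x, x ∈ Icc a b → m ≤ -g x) : m * (b - a) ≤ f a - f b := by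
  have hg_le : g ≤ᵐ[volume.restrict (Icc a b)] fun _ => -m := by
    filter_upwards [ae_restrict_of_ae hle, ae_restrict_mem measurableSet_Icc]
      with x hx hmem using le_neg_of_le_neg (hx hmem)
  have := intervalIntegral.integral_mono_ae_restrict hab hg intervalIntegrable_const hg_le
  rw [intervalIntegral.integral_const, smul_eq_mul, ← hfg] at this
  linarith

theorem AntitoneOn.mul_sub_mul_pow_le_sub {f g φ : ℝ → ℝ} {a b c : ℝ} {n : ℕ}
    (hanti : AntitoneOn φ (Icc a b)) (hφ : 0 ≤ φ b) (hc : 0 ≤ c) (hab : a ≤ b)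
    (hg : IntervalIntegrable g volume a b) (hfg : f b - f a = ∫ x in a..b, g x)
    (hle : ∀ᵐ x, x ∈ Icc a b → c * φ x ^ n ≤ -g x) : c * (b - a) * φ b ^ n ≤ f a - f b := by
  rw [mul_right_comm]
  refine mul_sub_le_sub_of_sub_eq_integral hab hg hfg ?_
  filter_upwards [hle] with x hx hmem
  refine le_trans ?_ (hx hmem)
  gcongr
  exact hanti hmem ⟨hab, le_rfl⟩ hmem.2

theorem exists_pos_forall_ge_rpow_le {f : ℝ → ℝ} (hf : Tendsto f atTop (𝓝 0)) {p ε : ℝ}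
    (hp : 0 < p) (hε : 0 < ε) : ∃ R, 0 < R ∧ ∀ r, R ≤ r → f r ^ p ≤ ε := by
  obtain ⟨R, hR⟩ := eventually_atTop.1 ((hf.rpow_const_nhds_zero hp).eventually_le_const hε)
  exact ⟨max R 1, by positivity, fun r hr => hR r (le_of_max_le_left hr)⟩

theorem Real.rpow_sub_one_div_eq_pow {x : ℝ} (hx : 0 ≤ x) {d : ℕ} (hd : 1 ≤ d) :
    x ^ (((d : ℝ) - 1) / d) = (x ^ (d⁻¹ : ℝ)) ^ (d - 1) := by
  rw [← Real.rpow_natCast, ← Real.rpow_mul hx, Nat.cast_sub hd, div_eq_inv_mul, Nat.cast_one]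

theorem half_mul_pow_le_neg_of_rpow_inv_le {x y c1 c2 : ℝ} {d : ℕ} (hx : 0 ≤ x) (hd : 1 ≤ d)
    (hc2 : 0 < c2) (hsmall : x ^ (d⁻¹ : ℝ) ≤ c1 / (2 * c2))
    (h : c1 * x ^ (((d : ℝ) - 1) / d) ≤ c2 * x - y) :
    c1 / 2 * (x ^ (d⁻¹ : ℝ)) ^ (d - 1) ≤ -y := by
  have hsplit : x = x ^ (d⁻¹ : ℝ) * (x ^ (d⁻¹ : ℝ)) ^ (d - 1) := by
    rw [← pow_succ', Nat.sub_add_cancel hd, Real.rpow_inv_natCast_pow hx (by omega)]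
  have hc2x : c2 * x ^ (d⁻¹ : ℝ) ≤ c1 / 2 := by
    rw [le_div_iff₀ (by positivity)] at hsmall
    linarith
  rw [Real.rpow_sub_one_div_eq_pow hx hd] at h
  nth_rewrite 2 [hsplit] at h
  linarith [mul_le_mul_of_nonneg_right hc2x (pow_nonneg (Real.rpow_nonneg hx (d⁻¹ : ℝ)) (d - 1))]

theorem apply_add_le_half_of_pow_decay {φ : ℝ → ℝ} {a c : ℝ} {n : ℕ} (hc : 0 < c)
    (hφa : 0 ≤ φ a)
    (hdecay : ∀ b, a ≤ b → c * (b - a) * φ b ^ n ≤ φ a ^ (n + 1) - φ b ^ (n + 1)) :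
    φ (a + 2 ^ n / c * φ a) ≤ φ a / 2 := by
  set b := a + 2 ^ n / c * φ a
  have hab : a ≤ b := le_add_of_nonneg_right (by positivity)
  by_contra! hlt
  have hpow : (φ a / 2) ^ n ≤ φ b ^ n := pow_le_pow_left₀ (by positivity) hlt.le n
  have hφb : 0 < φ b ^ (n + 1) := pow_pos ((by positivity : 0 ≤ φ a / 2).trans_lt hlt) _
  have hstep : c * (b - a) * (φ a / 2) ^ n = φ a ^ (n + 1) := by
    simp only [b, add_sub_cancel_left, div_pow]
    field_simp
    ring
  have := mul_le_mul_of_nonneg_left hpow (by nlinarith : 0 ≤ c * (b - a))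
  linarith [hdecay b hab]

theorem AntitoneOn.eq_zero_of_apply_add_mul_le_half {φ : ℝ → ℝ} {R K : ℝ}
    (hanti : AntitoneOn φ (Ici R)) (hK : 0 ≤ K) (hφ : ∀ r, R ≤ r → 0 ≤ φ r)
    (hhalf : ∀ a, R ≤ a → φ (a + K * φ a) ≤ φ a / 2) {a : ℝ} (ha : R ≤ a) :
    φ (a + 2 * K * φ a) = 0 := by
  have hjump : ∀ a, R ≤ a → R ≤ a + 2 * K * φ a := fun a ha => by
    nlinarith [mul_nonneg hK (hφ a ha)]
  have hle : ∀ k : ℕ, ∀ a, R ≤ a → φ (a + 2 * K * φ a) ≤ φ a / 2 ^ k := by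
    intro k
    induction k with
    | zero =>
      intro a ha
      simpa using hanti ha (hjump a ha) (by nlinarith [mul_nonneg hK (hφ a ha)])
    | succ k ih =>
      intro a ha
      have ha' : R ≤ a + K * φ a := by nlinarith [mul_nonneg hK (hφ a ha)]
      -- two jumps of size `K φ` from `a` land before one jump of size `2 K φ a`
      have hback : (a + K * φ a) + 2 * K * φ (a + K * φ a) ≤ a + 2 * K * φ a := by
        nlinarith [mul_le_mul_of_nonneg_left (hhalf a ha) hK]
      calc φ (a + 2 * K * φ a) ≤ φ ((a + K * φ a) + 2 * K * φ (a + K * φ a)) :=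
            hanti (hjump _ ha') (hjump a ha) hback
        _ ≤ φ (a + K * φ a) / 2 ^ k := ih _ ha'
        _ ≤ φ a / 2 / 2 ^ k := by gcongr; exact hhalf a ha
        _ = φ a / 2 ^ (k + 1) := by rw [pow_succ']; ring
  have hlim : Tendsto (fun k : ℕ => φ a / 2 ^ k) atTop (𝓝 0) :=
    tendsto_const_nhds.div_atTop (tendsto_pow_atTop_atTop_of_one_lt one_lt_two)
  exact le_antisymm (ge_of_tendsto' hlim fun k => hle k a ha) (hφ _ (hjump a ha))

/-- a nonincreasing locally absolutely continuous function satisfying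
`c₁ f^((d-1)/d) ≤ c₂ f - f'` a.e. and tending to `0` at infinity must vanish somewhere. -/
theorem vanishing_of_differential_inequality
    (d : ℕ) (hd : 2 ≤ d) (f g : ℝ → ℝ)
    (hfnn : ∀ r, 0 < r → 0 ≤ f r)
    (hmono : ∀ a b, 0 < a → a ≤ b → f b ≤ f a)
    (hac : ∀ a b, 0 < a → a ≤ b →
      IntervalIntegrable g volume a b ∧ f b - f a = ∫ r in a..b, g r)
    (c1 c2 : ℝ) (hc1 : 0 < c1) (hc2 : 0 < c2)
    (hineq : ∀ᵐ r ∂volume, 0 < r →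
      c1 * f r ^ ((d - 1 : ℝ) / d) ≤ c2 * f r - g r)
    (hlim : Filter.Tendsto f Filter.atTop (nhds 0)) :
    ∃ R0 : ℝ, 0 < R0 ∧ f R0 = 0 := by
  have hd1 : 1 ≤ d := by omega
  set φ : ℝ → ℝ := fun r => f r ^ (d⁻¹ : ℝ)
  have hf_eq : ∀ r, 0 < r → f r = φ r ^ d := fun r hr =>
    (Real.rpow_inv_natCast_pow (hfnn r hr) (by omega)).symm
  obtain ⟨R, hR0, hsmall⟩ := exists_pos_forall_ge_rpow_le hlim (p := (d⁻¹ : ℝ)) (by positivity)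
    (ε := c1 / (2 * c2)) (by positivity)
  have hpos : ∀ r, R ≤ r → 0 < r := fun r hr => hR0.trans_le hr
  have hφ_nonneg : ∀ r, R ≤ r → 0 ≤ φ r := fun r hr => Real.rpow_nonneg (hfnn r (hpos r hr)) _
  have hanti : AntitoneOn φ (Ici R) := fun a ha b hb hab =>
    Real.rpow_le_rpow (hfnn b (hpos b hb)) (hmono a b (hpos a ha) hab) (by positivity)
  have hdrift : ∀ᵐ r, R ≤ r → c1 / 2 * φ r ^ (d - 1) ≤ -g r := by
    filter_upwards [hineq] with r hr hRr
    exact half_mul_pow_le_neg_of_rpow_inv_le (hfnn r (hpos r hRr)) hd1 hc2 (hsmall r hRr)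
      (hr (hpos r hRr))
  have hdecay : ∀ a b, R ≤ a → a ≤ b →
      c1 / 2 * (b - a) * φ b ^ (d - 1) ≤ φ a ^ (d - 1 + 1) - φ b ^ (d - 1 + 1) := by
    intro a b ha hab
    obtain ⟨hg, hfg⟩ := hac a b (hpos a ha) hab
    rw [Nat.sub_add_cancel hd1, ← hf_eq a (hpos a ha), ← hf_eq b (hpos b (ha.trans hab))]
    refine (hanti.mono fun x hx => ha.trans hx.1).mul_sub_mul_pow_le_sub
      (hφ_nonneg b (ha.trans hab)) (by positivity) hab hg hfg ?_
    filter_upwards [hdrift] with x hx hmem using hx (ha.trans hmem.1)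
  have hK : (0 : ℝ) ≤ 2 ^ (d - 1) / (c1 / 2) := by positivity
  have hzero := hanti.eq_zero_of_apply_add_mul_le_half hK hφ_nonneg (fun a ha =>
    apply_add_le_half_of_pow_decay (half_pos hc1) (hφ_nonneg a ha) (hdecay a · ha)) le_rfl
  have hB : 0 < R + 2 * (2 ^ (d - 1) / (c1 / 2)) * φ R := by
    have := hφ_nonneg R le_rfl
    positivity
  exact ⟨_, hB, by rw [hf_eq _ hB, hzero, zero_pow (by omega)]⟩
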